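/- arXiv:2209.08426 — 4 statements merged into one kernel-verified Lean document; each statement's English description precedes it below -/
import Mathlib

section
/- Let q, r : ℝ × ℝ → ℂ be twice continuously differentiable functions of (x,t). For ζ ∈ ℂ define the 2×2 matrix-valued functions 𝒳 = [[−iζ², ζq],[ζr, iζ²]] and 𝒯 = [[−2iζ⁴ − i q r ζ², 2qζ³ + (i q_x + q²r)ζ],[2rζ³ + (−i r_x + q r²)ζ, 2iζ⁴ + i q r ζ²]]. Then, at a point (x,t), the zero-curvature identity 𝒳_t − 𝒯_x + 𝒳𝒯 − 𝒯𝒳 = 0 holds as a 2×2 matrix identity for every ζ ∈ ℂ if and only if the pair (q,r) satisfies the Kaup–Newell system i q_t + q_xx − i (q² r)_x = 0 and i r_t − r_xx − i (q r²)_x = 0 at (x,t). -/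
/-- Partial derivative with respect to the first (spatial) variable. -/
noncomputable def pdx (f : ℝ × ℝ → ℂ) (p : ℝ × ℝ) : ℂ :=
  deriv (fun s => f (s, p.2)) p.1

/-- Partial derivative with respect to the second (time) variable. -/
noncomputable def pdt (f : ℝ × ℝ → ℂ) (p : ℝ × ℝ) : ℂ :=
  deriv (fun s => f (p.1, s)) p.2

/-- Second partial derivative with respect to the spatial variable. -/
noncomputable def pdxx (f : ℝ × ℝ → ℂ) (p : ℝ × ℝ) : ℂ :=
  deriv (fun s => pdx f (s, p.2)) p.1

/-- The matrix 𝒳 of the AKNS pair for the Kaup–Newell system. -/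
noncomputable def KNX (q r : ℝ × ℝ → ℂ) (ζ : ℂ) (p : ℝ × ℝ) : Matrix (Fin 2) (Fin 2) ℂ :=
  !![-Complex.I * ζ ^ 2, ζ * q p;
     ζ * r p, Complex.I * ζ ^ 2]

/-- The matrix 𝒯 of the AKNS pair for the Kaup–Newell system. -/
noncomputable def KNT (q r : ℝ × ℝ → ℂ) (ζ : ℂ) (p : ℝ × ℝ) : Matrix (Fin 2) (Fin 2) ℂ :=
  !![-2 * Complex.I * ζ ^ 4 - Complex.I * q p * r p * ζ ^ 2,
     2 * q p * ζ ^ 3 + (Complex.I * pdx q p + (q p) ^ 2 * r p) * ζ;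
     2 * r p * ζ ^ 3 + (-Complex.I * pdx r p + q p * (r p) ^ 2) * ζ,
     2 * Complex.I * ζ ^ 4 + Complex.I * q p * r p * ζ ^ 2]

/-- The zero-curvature identity 𝒳_t − 𝒯_x + 𝒳𝒯 − 𝒯𝒳 = 0 (for all ζ ∈ ℂ) at a point (x,t)
holds if and only if (q, r) satisfies the Kaup–Newell system
i q_t + q_xx − i (q² r)_x = 0, i r_t − r_xx − i (q r²)_x = 0 at (x,t). -/
theorem stmt0 (q r : ℝ × ℝ → ℂ) (hq : ContDiff ℝ 2 q) (hr : ContDiff ℝ 2 r) (x t : ℝ) :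
    (∀ ζ : ℂ,
      (Matrix.of fun i j => deriv (fun s => KNX q r ζ (x, s) i j) t)
        - (Matrix.of fun i j => deriv (fun s => KNT q r ζ (s, t) i j) x)
        + KNX q r ζ (x, t) * KNT q r ζ (x, t)
        - KNT q r ζ (x, t) * KNX q r ζ (x, t) = 0)
    ↔
    (Complex.I * pdt q (x, t) + pdxx q (x, t)
        - Complex.I * deriv (fun s => (q (s, t)) ^ 2 * r (s, t)) x = 0 ∧
      Complex.I * pdt r (x, t) - pdxx r (x, t)
        - Complex.I * deriv (fun s => q (s, t) * (r (s, t)) ^ 2) x = 0) := by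
  -- one-variable slices are C²
  have hqX : ContDiff ℝ ((1:WithTop ℕ∞) + 1) (fun s : ℝ => q (s, t)) := by
    exact_mod_cast hq.comp (contDiff_id.prodMk contDiff_const)
  have hrX : ContDiff ℝ ((1:WithTop ℕ∞) + 1) (fun s : ℝ => r (s, t)) := by
    exact_mod_cast hr.comp (contDiff_id.prodMk contDiff_const)
  have hqT : ContDiff ℝ ((1:WithTop ℕ∞) + 1) (fun s : ℝ => q (x, s)) := by
    exact_mod_cast hq.comp (contDiff_const.prodMk contDiff_id)
  have hrT : ContDiff ℝ ((1:WithTop ℕ∞) + 1) (fun s : ℝ => r (x, s)) := by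
    exact_mod_cast hr.comp (contDiff_const.prodMk contDiff_id)
  have hqx : HasDerivAt (fun s : ℝ => q (s, t)) (pdx q (x, t)) x :=
    ((hqX.differentiable (by simp)) x).hasDerivAt
  have hrx : HasDerivAt (fun s : ℝ => r (s, t)) (pdx r (x, t)) x :=
    ((hrX.differentiable (by simp)) x).hasDerivAt
  have hqt : HasDerivAt (fun s : ℝ => q (x, s)) (pdt q (x, t)) t :=
    ((hqT.differentiable (by simp)) t).hasDerivAt
  have hrt : HasDerivAt (fun s : ℝ => r (x, s)) (pdt r (x, t)) t :=
    ((hrT.differentiable (by simp)) t).hasDerivAt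
  have hqxx : HasDerivAt (fun s : ℝ => pdx q (s, t)) (pdxx q (x, t)) x :=
    (((contDiff_succ_iff_deriv.mp hqX).2.2.differentiable one_ne_zero) x).hasDerivAt
  have hrxx : HasDerivAt (fun s : ℝ => pdx r (s, t)) (pdxx r (x, t)) x :=
    (((contDiff_succ_iff_deriv.mp hrX).2.2.differentiable one_ne_zero) x).hasDerivAt
  have hQ2 : HasDerivAt (fun s : ℝ => q (s, t) ^ 2)
      (pdx q (x, t) * q (x, t) + q (x, t) * pdx q (x, t)) x := by
    simpa [pow_two] using hqx.fun_mul hqx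
  have hR2 : HasDerivAt (fun s : ℝ => r (s, t) ^ 2)
      (pdx r (x, t) * r (x, t) + r (x, t) * pdx r (x, t)) x := by
    simpa [pow_two] using hrx.fun_mul hrx
  -- the nonlinear terms
  have hD1 : deriv (fun s => (q (s, t)) ^ 2 * r (s, t)) x
      = 2 * q (x, t) * pdx q (x, t) * r (x, t) + (q (x, t)) ^ 2 * pdx r (x, t) := by
    rw [(hQ2.fun_mul hrx).deriv]; ring
  have hD2 : deriv (fun s => q (s, t) * (r (s, t)) ^ 2) x
      = pdx q (x, t) * (r (x, t)) ^ 2 + 2 * q (x, t) * r (x, t) * pdx r (x, t) := by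
    rw [(hqx.fun_mul hR2).deriv]; ring
  set a := q (x, t)
  set b := r (x, t)
  set ax := pdx q (x, t)
  set bx := pdx r (x, t)
  set at' := pdt q (x, t)
  set bt := pdt r (x, t)
  set axx := pdxx q (x, t)
  set bxx := pdxx r (x, t)
  have key : ∀ ζ : ℂ,
      (Matrix.of fun i j => deriv (fun s => KNX q r ζ (x, s) i j) t)
        - (Matrix.of fun i j => deriv (fun s => KNT q r ζ (s, t) i j) x)
        + KNX q r ζ (x, t) * KNT q r ζ (x, t)
        - KNT q r ζ (x, t) * KNX q r ζ (x, t)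
      = !![0, ζ * (at' - Complex.I * axx - (2 * a * ax * b + a ^ 2 * bx));
           ζ * (bt + Complex.I * bxx - (ax * b ^ 2 + 2 * a * b * bx)), 0] := by
    intro ζ
    have hXt : (Matrix.of fun i j => deriv (fun s => KNX q r ζ (x, s) i j) t)
        = !![0, ζ * at'; ζ * bt, 0] := by
      ext i j
      fin_cases i <;> fin_cases j <;>
        simp only [KNX, Matrix.of_apply, Matrix.cons_val', Matrix.cons_val_zero,
          Matrix.cons_val_one, Matrix.head_cons, Matrix.empty_val',
          Matrix.cons_val_fin_one, Matrix.head_fin_const, Fin.mk_zero, Fin.mk_one]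
      · exact deriv_const _ _
      · exact (hqt.const_mul ζ).deriv
      · exact (hrt.const_mul ζ).deriv
      · exact deriv_const _ _
    have hTx : (Matrix.of fun i j => deriv (fun s => KNT q r ζ (s, t) i j) x)
        = !![-Complex.I * (ax * b + a * bx) * ζ ^ 2,
             2 * ax * ζ ^ 3 + (Complex.I * axx + (2 * a * ax * b + a ^ 2 * bx)) * ζ;
             2 * bx * ζ ^ 3 + (-Complex.I * bxx + (ax * b ^ 2 + 2 * a * b * bx)) * ζ,
             Complex.I * (ax * b + a * bx) * ζ ^ 2] := by
      ext i j
      fin_cases i <;> fin_cases j <;>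
        simp only [KNT, Matrix.of_apply, Matrix.cons_val', Matrix.cons_val_zero,
          Matrix.cons_val_one, Matrix.head_cons, Matrix.empty_val',
          Matrix.cons_val_fin_one, Matrix.head_fin_const, Fin.mk_zero, Fin.mk_one]
      · rw [(((hasDerivAt_const x (-2 * Complex.I * ζ ^ 4)).fun_sub
          ((((hqx.const_mul Complex.I).fun_mul hrx)).mul_const (ζ ^ 2)))).deriv]
        ring
      · rw [(((hqx.const_mul 2).mul_const (ζ ^ 3)).fun_add
          (((hqxx.const_mul Complex.I).fun_add (hQ2.fun_mul hrx)).mul_const ζ)).deriv]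
        ring
      · rw [(((hrx.const_mul 2).mul_const (ζ ^ 3)).fun_add
          (((hrxx.const_mul (-Complex.I)).fun_add (hqx.fun_mul hR2)).mul_const ζ)).deriv]
        ring
      · rw [((hasDerivAt_const x (2 * Complex.I * ζ ^ 4)).fun_add
          ((((hqx.const_mul Complex.I).fun_mul hrx)).mul_const (ζ ^ 2))).deriv]
        ring
    rw [hXt, hTx, KNX, KNT, Matrix.mul_fin_two, Matrix.mul_fin_two]
    ext i j
    fin_cases i <;> fin_cases j <;>
      simp only [Matrix.sub_apply, Matrix.add_apply, Matrix.of_apply, Matrix.cons_val',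
        Matrix.cons_val_zero, Matrix.cons_val_one, Matrix.head_cons, Matrix.empty_val',
        Matrix.cons_val_fin_one, Matrix.head_fin_const, Fin.mk_zero, Fin.mk_one, Fin.isValue]
    all_goals ring_nf
    all_goals (try simp only [Complex.I_sq])
    all_goals ring
  rw [hD1, hD2]
  constructor
  · intro h
    have h1 := (key 1).symm.trans (h 1)
    have e01 : (1 : ℂ) * (at' - Complex.I * axx - (2 * a * ax * b + a ^ 2 * bx)) = 0 := by
      have := congrFun (congrFun h1 0) 1
      simpa using this
    have e10 : (1 : ℂ) * (bt + Complex.I * bxx - (ax * b ^ 2 + 2 * a * b * bx)) = 0 := by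
      have := congrFun (congrFun h1 1) 0
      simpa using this
    constructor
    · linear_combination Complex.I * e01 + axx * Complex.I_mul_I
    · linear_combination Complex.I * e10 - bxx * Complex.I_mul_I
  · rintro ⟨h1, h2⟩ ζ
    rw [key ζ]
    have eA : at' - Complex.I * axx - (2 * a * ax * b + a ^ 2 * bx) = 0 := by
      linear_combination -Complex.I * h1 +
        (at' - (2 * a * ax * b + a ^ 2 * bx)) * Complex.I_mul_I
    have eB : bt + Complex.I * bxx - (ax * b ^ 2 + 2 * a * b * bx) = 0 := by
      linear_combination -Complex.I * h2 +
        (bt - (ax * b ^ 2 + 2 * a * b * bx)) * Complex.I_mul_I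
    rw [eA, eB]
    ext i j
    fin_cases i <;> fin_cases j <;> simp
end

section
/- Let q, r : ℝ × ℝ → ℂ be twice continuously differentiable solutions of the Kaup–Newell system i q_t + q_xx − i (q² r)_x = 0, i r_t − r_xx − i (q r²)_x = 0 on ℝ². Assume that for every t ∈ ℝ the function x ↦ q(x,t) r(x,t) is integrable on ℝ, that for every t the function x ↦ i(q_x r − q r_x)(x,t) + (3/2) q(x,t)² r(x,t)² tends to 0 as x → ±∞, and that for every compact interval J ⊂ ℝ there is an integrable function g : ℝ → [0,∞) with |∂_t(q r)(x,t)| ≤ g(x) for all x ∈ ℝ and t ∈ J. Then the quantity μ(t) := ∫_ℝ q(x,t) r(x,t) dx is independent of t, i.e., μ(t) = μ(0) for all t ∈ ℝ. -/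
set_option maxHeartbeats 1000000
open MeasureTheory Filter

lemma slice_x_hasDerivAt {f : ℝ × ℝ → ℂ} (hf : Differentiable ℝ f) (x t : ℝ) :
    HasDerivAt (fun s => f (s, t)) (pdx f (x, t)) x := by
  have h : DifferentiableAt ℝ (fun s : ℝ => f (s, t)) x :=
    (hf (x, t)).comp x ((differentiableAt_id).prodMk (differentiableAt_const t))
  simpa [pdx] using h.hasDerivAt

lemma slice_t_hasDerivAt {f : ℝ × ℝ → ℂ} (hf : Differentiable ℝ f) (x t : ℝ) :
    HasDerivAt (fun s => f (x, s)) (pdt f (x, t)) t := by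
  have h : DifferentiableAt ℝ (fun s : ℝ => f (x, s)) t :=
    (hf (x, t)).comp t ((differentiableAt_const x).prodMk differentiableAt_id)
  simpa [pdt] using h.hasDerivAt

lemma pdx_eq_fderiv {f : ℝ × ℝ → ℂ} (hf : Differentiable ℝ f) (p : ℝ × ℝ) :
    pdx f p = fderiv ℝ f p (1, 0) := by
  have hc : HasDerivAt (fun s : ℝ => (s, p.2)) ((1 : ℝ), (0 : ℝ)) p.1 :=
    (hasDerivAt_id p.1).prodMk (hasDerivAt_const p.1 p.2)
  have h := (hf p).hasFDerivAt.comp_hasDerivAt p.1 hc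
  exact h.deriv.symm ▸ rfl

lemma pdt_eq_fderiv {f : ℝ × ℝ → ℂ} (hf : Differentiable ℝ f) (p : ℝ × ℝ) :
    pdt f p = fderiv ℝ f p (0, 1) := by
  have hc : HasDerivAt (fun s : ℝ => (p.1, s)) ((0 : ℝ), (1 : ℝ)) p.2 :=
    (hasDerivAt_const p.2 p.1).prodMk (hasDerivAt_id p.2)
  have h := (hf p).hasFDerivAt.comp_hasDerivAt p.2 hc
  exact h.deriv.symm ▸ rfl

lemma slice_pdx_hasDerivAt {f : ℝ × ℝ → ℂ} (hf : ContDiff ℝ 2 f) (x t : ℝ) :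
    HasDerivAt (fun s => pdx f (s, t)) (pdxx f (x, t)) x := by
  have hfd : Differentiable ℝ f := hf.differentiable (by norm_num)
  have h1 : Differentiable ℝ (fun p : ℝ × ℝ => fderiv ℝ f p ((1 : ℝ), (0 : ℝ))) := by
    have h := hf.fderiv_right (m := 1) (by norm_num)
    exact (h.clm_apply contDiff_const).differentiable (by norm_num)
  have h2 : DifferentiableAt ℝ (fun s : ℝ => pdx f (s, t)) x := by
    have he : (fun s : ℝ => pdx f (s, t)) = fun s => fderiv ℝ f (s, t) ((1 : ℝ), (0 : ℝ)) := by
      funext s; exact pdx_eq_fderiv hfd (s, t)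
    rw [he]
    exact (h1 (x, t)).comp (f := fun s : ℝ => ((s, t) : ℝ × ℝ)) x ((differentiableAt_id).prodMk (differentiableAt_const t))
  simpa [pdxx] using h2.hasDerivAt

/-- For a Schwartz-type solution of the Kaup–Newell system, the quantity
`μ(t) = ∫_ℝ q(x,t) r(x,t) dx` is independent of `t`. -/
theorem stmt3 (q r : ℝ × ℝ → ℂ) (hq : ContDiff ℝ 2 q) (hr : ContDiff ℝ 2 r)
    (heq1 : ∀ x t : ℝ,
      Complex.I * pdt q (x, t) + pdxx q (x, t)
        - Complex.I * deriv (fun s => (q (s, t)) ^ 2 * r (s, t)) x = 0)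
    (heq2 : ∀ x t : ℝ,
      Complex.I * pdt r (x, t) - pdxx r (x, t)
        - Complex.I * deriv (fun s => q (s, t) * (r (s, t)) ^ 2) x = 0)
    (hint : ∀ t : ℝ, Integrable (fun x => q (x, t) * r (x, t)))
    (hfluxTop : ∀ t : ℝ,
      Tendsto (fun x : ℝ =>
          Complex.I * (pdx q (x, t) * r (x, t) - q (x, t) * pdx r (x, t))
            + (3 / 2) * (q (x, t)) ^ 2 * (r (x, t)) ^ 2) atTop (nhds 0))
    (hfluxBot : ∀ t : ℝ,
      Tendsto (fun x : ℝ =>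
          Complex.I * (pdx q (x, t) * r (x, t) - q (x, t) * pdx r (x, t))
            + (3 / 2) * (q (x, t)) ^ 2 * (r (x, t)) ^ 2) atBot (nhds 0))
    (hdom : ∀ c d : ℝ, ∃ g : ℝ → ℝ, Integrable g ∧
      ∀ x t : ℝ, t ∈ Set.Icc c d → ‖pdt (fun p => q p * r p) (x, t)‖ ≤ g x) :
    ∀ t : ℝ, (∫ x : ℝ, q (x, t) * r (x, t)) = ∫ x : ℝ, q (x, 0) * r (x, 0) := by
  have hqd : Differentiable ℝ q := hq.differentiable (by norm_num)
  have hrd : Differentiable ℝ r := hr.differentiable (by norm_num)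
  have hf : ContDiff ℝ 2 (fun p : ℝ × ℝ => q p * r p) := hq.mul hr
  have hfd : Differentiable ℝ (fun p : ℝ × ℝ => q p * r p) := hf.differentiable (by norm_num)
  -- Step A : pointwise conservation law
  have key : ∀ t x : ℝ, HasDerivAt (fun y : ℝ =>
      Complex.I * (pdx q (y, t) * r (y, t) - q (y, t) * pdx r (y, t))
        + (3 / 2) * (q (y, t)) ^ 2 * (r (y, t)) ^ 2)
      (pdt (fun p => q p * r p) (x, t)) x := by
    intro t x
    have hQ := slice_x_hasDerivAt hqd x t
    have hR := slice_x_hasDerivAt hrd x t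
    have hQQ := slice_pdx_hasDerivAt hq x t
    have hRR := slice_pdx_hasDerivAt hr x t
    have h1 : HasDerivAt (fun s : ℝ => pdx q (s, t) * r (s, t) - q (s, t) * pdx r (s, t))
        ((pdxx q (x, t) * r (x, t) + pdx q (x, t) * pdx r (x, t))
          - (pdx q (x, t) * pdx r (x, t) + q (x, t) * pdxx r (x, t))) x :=
      (hQQ.mul hR).sub (hQ.mul hRR)
    have hQ2 : HasDerivAt (fun s : ℝ => (q (s, t)) ^ 2)
        (2 * q (x, t) * pdx q (x, t)) x := by
      simp only [pow_two]
      exact (hQ.mul hQ).congr_deriv (by ring)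
    have hR2 : HasDerivAt (fun s : ℝ => (r (s, t)) ^ 2)
        (2 * r (x, t) * pdx r (x, t)) x := by
      simp only [pow_two]
      exact (hR.mul hR).congr_deriv (by ring)
    have h3 : HasDerivAt (fun s : ℝ => (3 / 2 : ℂ) * (q (s, t)) ^ 2)
        ((3 / 2 : ℂ) * (2 * q (x, t) * pdx q (x, t))) x :=
      hQ2.const_mul (3 / 2 : ℂ)
    have h4 := hR2
    have hD := (h1.const_mul Complex.I).add (h3.mul h4)
    -- value of pdt (q r)
    have hQt := slice_t_hasDerivAt hqd x t
    have hRt := slice_t_hasDerivAt hrd x t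
    have hsplit : pdt (fun p => q p * r p) (x, t)
        = pdt q (x, t) * r (x, t) + q (x, t) * pdt r (x, t) := by
      have := (hQt.mul hRt).deriv
      exact this
    -- spatial derivatives of the cubic terms
    have hD1 : deriv (fun s => (q (s, t)) ^ 2 * r (s, t)) x
        = 2 * q (x, t) * pdx q (x, t) * r (x, t)
          + (q (x, t)) ^ 2 * pdx r (x, t) := (hQ2.mul hR).deriv
    have hD2 : deriv (fun s => q (s, t) * (r (s, t)) ^ 2) x
        = pdx q (x, t) * (r (x, t)) ^ 2
          + q (x, t) * (2 * r (x, t) * pdx r (x, t)) := (hQ.mul hR2).deriv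
    have h01 := heq1 x t
    have h02 := heq2 x t
    rw [hD1] at h01
    rw [hD2] at h02
    have hqt : pdt q (x, t) = Complex.I * pdxx q (x, t)
        + (2 * q (x, t) * pdx q (x, t) * r (x, t) + (q (x, t)) ^ 2 * pdx r (x, t)) := by
      linear_combination (-Complex.I) * h01
        + (pdt q (x, t) - (2 * q (x, t) * pdx q (x, t) * r (x, t)
            + (q (x, t)) ^ 2 * pdx r (x, t))) * Complex.I_mul_I
    have hrt : pdt r (x, t) = -Complex.I * pdxx r (x, t)
        + (pdx q (x, t) * (r (x, t)) ^ 2 + 2 * q (x, t) * r (x, t) * pdx r (x, t)) := by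
      linear_combination (-Complex.I) * h02
        + (pdt r (x, t) - (pdx q (x, t) * (r (x, t)) ^ 2
            + 2 * q (x, t) * r (x, t) * pdx r (x, t))) * Complex.I_mul_I
    refine hD.congr_deriv ?_
    rw [hsplit, hqt, hrt]
    ring
  -- continuity of the time derivative in x
  have hcont : ∀ t : ℝ, Continuous (fun x : ℝ => pdt (fun p => q p * r p) (x, t)) := by
    intro t
    have he : (fun x : ℝ => pdt (fun p => q p * r p) (x, t))
        = fun x : ℝ => fderiv ℝ (fun p : ℝ × ℝ => q p * r p) (x, t) ((0 : ℝ), (1 : ℝ)) := by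
      funext x; exact pdt_eq_fderiv hfd (x, t)
    rw [he]
    have h := hf.fderiv_right (m := 1) (by norm_num)
    have hc2 : Continuous (fun p : ℝ × ℝ =>
        fderiv ℝ (fun p : ℝ × ℝ => q p * r p) p ((0 : ℝ), (1 : ℝ))) :=
      (h.clm_apply (contDiff_const (c := ((0 : ℝ), (1 : ℝ))))).continuous
    exact hc2.comp (continuous_id.prodMk continuous_const)
  -- Step B : derivative of μ
  have hderivμ : ∀ t : ℝ, HasDerivAt (fun τ => ∫ x : ℝ, q (x, τ) * r (x, τ))
      (∫ x : ℝ, pdt (fun p => q p * r p) (x, t)) t := by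
    intro t
    obtain ⟨g, hg, hgb⟩ := hdom (t - 1) (t + 1)
    have hmeas : ∀ᶠ τ in nhds t, AEStronglyMeasurable
        (fun x : ℝ => q (x, τ) * r (x, τ)) volume := by
      filter_upwards with τ
      exact ((hf.continuous.comp (continuous_id.prodMk continuous_const))).aestronglyMeasurable
    have hmeas' : AEStronglyMeasurable
        (fun x : ℝ => pdt (fun p => q p * r p) (x, t)) volume :=
      (hcont t).aestronglyMeasurable
    have hbound : ∀ᵐ x : ℝ, ∀ τ ∈ Metric.ball t 1,
        ‖pdt (fun p => q p * r p) (x, τ)‖ ≤ g x := by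
      filter_upwards with x τ hτ
      have : τ ∈ Set.Icc (t - 1) (t + 1) := by
        rw [Metric.mem_ball, Real.dist_eq, abs_lt] at hτ
        constructor <;> linarith
      exact hgb x τ this
    have hdiff : ∀ᵐ x : ℝ, ∀ τ ∈ Metric.ball t 1,
        HasDerivAt (fun τ => q (x, τ) * r (x, τ)) (pdt (fun p => q p * r p) (x, τ)) τ := by
      filter_upwards with x τ _
      exact slice_t_hasDerivAt hfd x τ
    exact (hasDerivAt_integral_of_dominated_loc_of_deriv_le (Metric.ball_mem_nhds t one_pos) hmeas (hint t)
      hmeas' hbound hg hdiff).2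
  -- Step C : the derivative vanishes
  have hzero : ∀ t : ℝ, (∫ x : ℝ, pdt (fun p => q p * r p) (x, t)) = 0 := by
    intro t
    have hi : Integrable (fun x : ℝ => pdt (fun p => q p * r p) (x, t)) := by
      obtain ⟨g, hg, hgb⟩ := hdom t t
      exact hg.mono' (hcont t).aestronglyMeasurable
        (Filter.Eventually.of_forall fun x => hgb x t ⟨le_rfl, le_rfl⟩)
    have h1 := integral_Ioi_of_hasDerivAt_of_tendsto' (a := 0)
      (fun x _ => key t x) hi.integrableOn (hfluxTop t)
    have h2 := integral_Iic_of_hasDerivAt_of_tendsto' (a := 0)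
      (fun x _ => key t x) hi.integrableOn (hfluxBot t)
    rw [← intervalIntegral.integral_Iic_add_Ioi (b := (0 : ℝ)) hi.integrableOn hi.integrableOn, h1, h2]
    ring
  -- Step D : conclude
  intro t
  have hd : ∀ τ : ℝ, HasDerivAt (fun τ => ∫ x : ℝ, q (x, τ) * r (x, τ)) 0 τ :=
    fun τ => hzero τ ▸ hderivμ τ
  exact is_const_of_deriv_eq_zero (fun τ => (hd τ).differentiableAt)
    (fun τ => (hd τ).deriv) t 0
end

section
/- Fix x ∈ ℝ. Let Ω, Ω̄ : ℝ → ℂ be differentiable with derivatives Ω', Ω̄', and let K₁, K₂, K̄₁, K̄₂ : [x, ∞) → ℂ be measurable. Assume that for every y > x the functions z ↦ K₁(z) Ω'(z+y), z ↦ K̄₂(z) Ω̄'(z+y), z ↦ K̄₁(z) Ω̄(z+y), z ↦ K₂(z) Ω(z+y) are integrable on [x, ∞), and the functions (z,s) ↦ K₁(z) Ω'(z+s) Ω̄(s+y) and (z,s) ↦ K̄₂(z) Ω̄'(z+s) Ω(s+y) are integrable on [x, ∞) × [x, ∞). Then the following are equivalent for the quadruple (K₁, K₂, K̄₁, K̄₂):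 (i) for all y > x the coupled Marchenko system holds: K̄₁(y) = i∫_x^∞ K₁(z) Ω'(z+y) dz, K₁(y) + Ω̄(x+y) + ∫_x^∞ K̄₁(z) Ω̄(z+y) dz = 0, K̄₂(y) + Ω(x+y) + ∫_x^∞ K₂(z) Ω(z+y) dz = 0, K₂(y) = −i∫_x^∞ K̄₂(z) Ω̄'(z+y) dz; (ii) for all y > x the uncoupled Marchenko equations K₁(y) + Ω̄(x+y) + i∫_x^∞∫_x^∞ K₁(z) Ω'(z+s) Ω̄(s+y) dz ds = 0 and K̄₂(y) + Ω(x+y) − i∫_x^∞∫_x^∞ K̄₂(z) Ω̄'(z+s) Ω(s+y) dz ds = 0 hold, together with the auxiliary equations K̄₁(y) = i∫_x^∞ K₁(z) Ω'(z+y) dz and K₂(y) = −i∫_x^∞ K̄₂(z) Ω̄'(z+y) dz. -/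
open MeasureTheory Set


private lemma marchenko_key (x : ℝ) (c : ℂ) (K W : ℝ → ℂ) (H : ℝ → ℝ → ℂ)
    (h : ∀ s, x < s → K s = c * ∫ z in Ioi x, H z s) :
    (∫ s in Ioi x, K s * W s) = c * ∫ s in Ioi x, ∫ z in Ioi x, H z s * W s := by
  rw [← integral_const_mul]
  refine setIntegral_congr_fun measurableSet_Ioi fun s hs => ?_
  rw [h s hs, mul_assoc, ← integral_mul_const]

/-- Equivalence of the coupled Marchenko system of four integral equations with the
uncoupled Marchenko system together with the auxiliary equations, at a fixed base point `x`. -/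
theorem stmt5 (x : ℝ) (Ω Ωbar Ω' Ωbar' : ℝ → ℂ) (K₁ K₂ Kbar₁ Kbar₂ : ℝ → ℂ)
    (hΩ : ∀ y : ℝ, HasDerivAt Ω (Ω' y) y)
    (hΩbar : ∀ y : ℝ, HasDerivAt Ωbar (Ωbar' y) y)
    (hK₁ : Measurable K₁) (hK₂ : Measurable K₂)
    (hKbar₁ : Measurable Kbar₁) (hKbar₂ : Measurable Kbar₂)
    (hi1 : ∀ y : ℝ, x < y → IntegrableOn (fun z => K₁ z * Ω' (z + y)) (Ioi x))
    (hi2 : ∀ y : ℝ, x < y → IntegrableOn (fun z => Kbar₂ z * Ωbar' (z + y)) (Ioi x))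
    (hi3 : ∀ y : ℝ, x < y → IntegrableOn (fun z => Kbar₁ z * Ωbar (z + y)) (Ioi x))
    (hi4 : ∀ y : ℝ, x < y → IntegrableOn (fun z => K₂ z * Ω (z + y)) (Ioi x))
    (hi5 : ∀ y : ℝ, x < y →
      IntegrableOn (fun p : ℝ × ℝ => K₁ p.1 * Ω' (p.1 + p.2) * Ωbar (p.2 + y))
        ((Ioi x) ×ˢ (Ioi x)))
    (hi6 : ∀ y : ℝ, x < y →
      IntegrableOn (fun p : ℝ × ℝ => Kbar₂ p.1 * Ωbar' (p.1 + p.2) * Ω (p.2 + y))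
        ((Ioi x) ×ˢ (Ioi x))) :
    (∀ y : ℝ, x < y →
      (Kbar₁ y = Complex.I * ∫ z in Ioi x, K₁ z * Ω' (z + y)) ∧
      (K₁ y + Ωbar (x + y) + ∫ z in Ioi x, Kbar₁ z * Ωbar (z + y) = 0) ∧
      (Kbar₂ y + Ω (x + y) + ∫ z in Ioi x, K₂ z * Ω (z + y) = 0) ∧
      (K₂ y = -Complex.I * ∫ z in Ioi x, Kbar₂ z * Ωbar' (z + y)))
    ↔
    (∀ y : ℝ, x < y →
      (K₁ y + Ωbar (x + y)
        + Complex.I * ∫ s in Ioi x, ∫ z in Ioi x, K₁ z * Ω' (z + s) * Ωbar (s + y) = 0) ∧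
      (Kbar₂ y + Ω (x + y)
        - Complex.I * ∫ s in Ioi x, ∫ z in Ioi x, Kbar₂ z * Ωbar' (z + s) * Ω (s + y) = 0) ∧
      (Kbar₁ y = Complex.I * ∫ z in Ioi x, K₁ z * Ω' (z + y)) ∧
      (K₂ y = -Complex.I * ∫ z in Ioi x, Kbar₂ z * Ωbar' (z + y))) := by
  constructor
  · intro h y hy
    obtain ⟨h1, h2, h3, h4⟩ := h y hy
    refine ⟨?_, ?_, h1, h4⟩
    · have key := marchenko_key x Complex.I Kbar₁ (fun s => Ωbar (s + y))
        (fun z s => K₁ z * Ω' (z + s)) (fun s hs => (h s hs).1)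
      rw [← key]; exact h2
    · have key := marchenko_key x (-Complex.I) K₂ (fun s => Ω (s + y))
        (fun z s => Kbar₂ z * Ωbar' (z + s)) (fun s hs => (h s hs).2.2.2)
      rw [sub_eq_add_neg, ← neg_mul, ← key]
      exact h3
  · intro h y hy
    obtain ⟨h1, h2, h3, h4⟩ := h y hy
    refine ⟨h3, ?_, ?_, h4⟩
    · have key := marchenko_key x Complex.I Kbar₁ (fun s => Ωbar (s + y))
        (fun z s => K₁ z * Ω' (z + s)) (fun s hs => (h s hs).2.2.1)
      rw [key]; exact h1
    · have key := marchenko_key x (-Complex.I) K₂ (fun s => Ω (s + y))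
        (fun z s => Kbar₂ z * Ωbar' (z + s)) (fun s hs => (h s hs).2.2.2)
      rw [key, neg_mul, ← sub_eq_add_neg]
      exact h2
end

section
/- Define q, r : ℝ × ℝ → ℂ by q(x,t) = 192 e^{10(x+10it)} (32 e^{16(x+4it)} − 15i) / (32 e^{16(x+4it)} + 9i)² and r(x,t) = 128 e^{6(x−6it)} (32 e^{16(x+4it)} + 9i) / (32 e^{16(x+4it)} − 15i)². Then at every point (x,t) ∈ ℝ² at which 32 e^{16(x+4it)} + 9i ≠ 0 and 32 e^{16(x+4it)} − 15i ≠ 0, the pair (q, r) satisfies the Kaup–Newell system i q_t + q_xx − i (q² r)_x = 0 and i r_t − r_xx − i (q r²)_x = 0. -/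
/-- The explicit potential `q(x,t)` of Example 9.2. -/
noncomputable def qEx (p : ℝ × ℝ) : ℂ :=
  192 * Complex.exp (10 * ((p.1 : ℂ) + 10 * Complex.I * (p.2 : ℂ)))
      * (32 * Complex.exp (16 * ((p.1 : ℂ) + 4 * Complex.I * (p.2 : ℂ))) - 15 * Complex.I)
    / (32 * Complex.exp (16 * ((p.1 : ℂ) + 4 * Complex.I * (p.2 : ℂ))) + 9 * Complex.I) ^ 2

/-- The explicit potential `r(x,t)` of Example 9.2. -/
noncomputable def rEx (p : ℝ × ℝ) : ℂ :=
  128 * Complex.exp (6 * ((p.1 : ℂ) - 6 * Complex.I * (p.2 : ℂ)))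
      * (32 * Complex.exp (16 * ((p.1 : ℂ) + 4 * Complex.I * (p.2 : ℂ))) + 9 * Complex.I)
    / (32 * Complex.exp (16 * ((p.1 : ℂ) + 4 * Complex.I * (p.2 : ℂ))) - 15 * Complex.I) ^ 2

set_option maxHeartbeats 1000000

namespace KN17

open Complex

lemma Ipow2 : Complex.I ^ 2 = -1 := Complex.I_sq
lemma Ipow3 : Complex.I ^ 3 = -Complex.I := by rw [pow_succ, Ipow2]; ring
lemma Ipow4 : Complex.I ^ 4 = 1 := by rw [pow_succ, Ipow3]; simp [Complex.I_mul_I]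
lemma Ipow5 : Complex.I ^ 5 = Complex.I := by rw [pow_succ, Ipow4]; ring
lemma Ipow6 : Complex.I ^ 6 = -1 := by rw [pow_succ, Ipow5]; simp [Complex.I_mul_I]
lemma Ipow7 : Complex.I ^ 7 = -Complex.I := by rw [pow_succ, Ipow6]; ring
lemma Ipow8 : Complex.I ^ 8 = 1 := by rw [pow_succ, Ipow7]; simp [Complex.I_mul_I]
lemma Ipow9 : Complex.I ^ 9 = Complex.I := by rw [pow_succ, Ipow8]; ring
lemma Ipow10 : Complex.I ^ 10 = -1 := by rw [pow_succ, Ipow9]; simp [Complex.I_mul_I]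
lemma Ipow11 : Complex.I ^ 11 = -Complex.I := by rw [pow_succ, Ipow10]; ring
lemma Ipow12 : Complex.I ^ 12 = 1 := by rw [pow_succ, Ipow11]; simp [Complex.I_mul_I]
lemma Ipow13 : Complex.I ^ 13 = Complex.I := by rw [pow_succ, Ipow12]; ring
lemma Ipow14 : Complex.I ^ 14 = -1 := by rw [pow_succ, Ipow13]; simp [Complex.I_mul_I]
lemma Ipow15 : Complex.I ^ 15 = -Complex.I := by rw [pow_succ, Ipow14]; ring
lemma Ipow16 : Complex.I ^ 16 = 1 := by rw [pow_succ, Ipow15]; simp [Complex.I_mul_I]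
lemma Ipow17 : Complex.I ^ 17 = Complex.I := by rw [pow_succ, Ipow16]; ring
lemma Ipow18 : Complex.I ^ 18 = -1 := by rw [pow_succ, Ipow17]; simp [Complex.I_mul_I]
lemma Ipow19 : Complex.I ^ 19 = -Complex.I := by rw [pow_succ, Ipow18]; ring
lemma Ipow20 : Complex.I ^ 20 = 1 := by rw [pow_succ, Ipow19]; simp [Complex.I_mul_I]
lemma Ipow21 : Complex.I ^ 21 = Complex.I := by rw [pow_succ, Ipow20]; ring
lemma Ipow22 : Complex.I ^ 22 = -1 := by rw [pow_succ, Ipow21]; simp [Complex.I_mul_I]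
lemma Ipow23 : Complex.I ^ 23 = -Complex.I := by rw [pow_succ, Ipow22]; ring
lemma Ipow24 : Complex.I ^ 24 = 1 := by rw [pow_succ, Ipow23]; simp [Complex.I_mul_I]

lemma hexpx (a b : ℂ) (x : ℝ) :
    HasDerivAt (fun s : ℝ => Complex.exp (a * (s : ℂ) + b))
      (a * Complex.exp (a * (x : ℂ) + b)) x := by
  have h : HasDerivAt (fun z : ℂ => Complex.exp (a * z + b))
      (a * Complex.exp (a * (x : ℂ) + b)) (x : ℂ) := by
    have h1 : HasDerivAt (fun z : ℂ => a * z + b) a (x : ℂ) := by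
      simpa using ((hasDerivAt_id (x : ℂ)).const_mul a).add_const b
    simpa [mul_comm] using h1.cexp
  exact h.comp_ofReal

lemma hexpx' (a c : ℂ) (x : ℝ) :
    HasDerivAt (fun s : ℝ => Complex.exp (a * (s : ℂ) - c))
      (a * Complex.exp (a * (x : ℂ) - c)) x := by
  have h : HasDerivAt (fun z : ℂ => Complex.exp (a * z - c))
      (a * Complex.exp (a * (x : ℂ) - c)) (x : ℂ) := by
    have h1 : HasDerivAt (fun z : ℂ => a * z - c) a (x : ℂ) := by
      simpa using ((hasDerivAt_id (x : ℂ)).const_mul a).sub_const c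
    simpa [mul_comm] using h1.cexp
  exact h.comp_ofReal

lemma hexpt (a b : ℂ) (t : ℝ) :
    HasDerivAt (fun s : ℝ => Complex.exp (b + a * (s : ℂ)))
      (a * Complex.exp (b + a * (t : ℂ))) t := by
  have h : HasDerivAt (fun z : ℂ => Complex.exp (b + a * z))
      (a * Complex.exp (b + a * (t : ℂ))) (t : ℂ) := by
    have h1 : HasDerivAt (fun z : ℂ => b + a * z) a (t : ℂ) := by
      simpa using ((hasDerivAt_id (t : ℂ)).const_mul a).const_add b
    simpa [mul_comm] using h1.cexp
  exact h.comp_ofReal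

lemma hexpt' (a b : ℂ) (t : ℝ) :
    HasDerivAt (fun s : ℝ => Complex.exp (b - a * (s : ℂ)))
      (-(a * Complex.exp (b - a * (t : ℂ)))) t := by
  have h : HasDerivAt (fun z : ℂ => Complex.exp (b - a * z))
      (-(a * Complex.exp (b - a * (t : ℂ)))) (t : ℂ) := by
    have h1 : HasDerivAt (fun z : ℂ => b - a * z) (-a) (t : ℂ) := by
      simpa using ((hasDerivAt_id (t : ℂ)).const_mul a).const_sub b
    simpa [mul_comm] using h1.cexp
  exact h.comp_ofReal

/-- x-derivative of the q-shape. -/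
lemma L1 (f g : ℝ → ℂ) (x : ℝ) (hf : HasDerivAt f (10 * f x) x)
    (hg : HasDerivAt g (16 * g x) x) (h : 32 * g x + 9 * Complex.I ≠ 0) :
    HasDerivAt (fun s => 192 * f s * (32 * g s - 15 * Complex.I) / (32 * g s + 9 * Complex.I) ^ 2)
      (f x * (259200 + 3465216 * Complex.I * g x - 1179648 * g x ^ 2)
        / (32 * g x + 9 * Complex.I) ^ 3) x := by
  have hd := (hasDerivAt_pow 2 (32 * g x + 9 * Complex.I)).comp x
      ((hg.const_mul (32 : ℂ)).add_const (9 * Complex.I))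
  have h1 := ((hf.const_mul (192 : ℂ)).mul ((hg.const_mul (32 : ℂ)).sub_const (15 * Complex.I))).div
      hd (pow_ne_zero 2 h)
  convert h1 using 1
  · rfl
  · rfl
  simp only [Function.comp_apply, Pi.mul_apply, Pi.add_apply, Pi.sub_apply, Nat.reduceSub, pow_one, Nat.cast_ofNat]
  field_simp
  ring_nf
  simp only [Ipow2, Ipow3, Ipow4, Ipow5, Ipow6, Ipow7, Ipow8, Ipow9, Ipow10, Ipow11, Ipow12, Ipow13, Ipow14, Ipow15, Ipow16, Ipow17, Ipow18, Ipow19, Ipow20, Ipow21, Ipow22, Ipow23, Ipow24]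
  ring

/-- t-derivative of the q-shape. -/
lemma L2 (f g : ℝ → ℂ) (x : ℝ) (hf : HasDerivAt f (100 * Complex.I * f x) x)
    (hg : HasDerivAt g (64 * Complex.I * g x) x) (h : 32 * g x + 9 * Complex.I ≠ 0) :
    HasDerivAt (fun s => 192 * f s * (32 * g s - 15 * Complex.I) / (32 * g s + 9 * Complex.I) ^ 2)
      (f x * (2592000 * Complex.I - 11649024 * g x + 7077888 * Complex.I * g x ^ 2)
        / (32 * g x + 9 * Complex.I) ^ 3) x := by
  have hd := (hasDerivAt_pow 2 (32 * g x + 9 * Complex.I)).comp x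
      ((hg.const_mul (32 : ℂ)).add_const (9 * Complex.I))
  have h1 := ((hf.const_mul (192 : ℂ)).mul ((hg.const_mul (32 : ℂ)).sub_const (15 * Complex.I))).div
      hd (pow_ne_zero 2 h)
  convert h1 using 1
  · rfl
  · rfl
  simp only [Function.comp_apply, Pi.mul_apply, Pi.add_apply, Pi.sub_apply, Nat.reduceSub, pow_one, Nat.cast_ofNat]
  field_simp
  ring_nf
  simp only [Ipow2, Ipow3, Ipow4, Ipow5, Ipow6, Ipow7, Ipow8, Ipow9, Ipow10, Ipow11, Ipow12, Ipow13, Ipow14, Ipow15, Ipow16, Ipow17, Ipow18, Ipow19, Ipow20, Ipow21, Ipow22, Ipow23, Ipow24]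
  ring

/-- x-derivative of the r-shape. -/
lemma L3 (f g : ℝ → ℂ) (x : ℝ) (hf : HasDerivAt f (6 * f x) x)
    (hg : HasDerivAt g (16 * g x) x) (h : 32 * g x - 15 * Complex.I ≠ 0) :
    HasDerivAt (fun s => 128 * f s * (32 * g s + 9 * Complex.I) / (32 * g s - 15 * Complex.I) ^ 2)
      (f x * (103680 - 2310144 * Complex.I * g x - 1310720 * g x ^ 2)
        / (32 * g x - 15 * Complex.I) ^ 3) x := by
  have hd := (hasDerivAt_pow 2 (32 * g x - 15 * Complex.I)).comp x
      ((hg.const_mul (32 : ℂ)).sub_const (15 * Complex.I))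
  have h1 := ((hf.const_mul (128 : ℂ)).mul ((hg.const_mul (32 : ℂ)).add_const (9 * Complex.I))).div
      hd (pow_ne_zero 2 h)
  convert h1 using 1
  · rfl
  · rfl
  simp only [Function.comp_apply, Pi.mul_apply, Pi.add_apply, Pi.sub_apply, Nat.reduceSub, pow_one, Nat.cast_ofNat]
  field_simp
  ring_nf
  simp only [Ipow2, Ipow3, Ipow4, Ipow5, Ipow6, Ipow7, Ipow8, Ipow9, Ipow10, Ipow11, Ipow12, Ipow13, Ipow14, Ipow15, Ipow16, Ipow17, Ipow18, Ipow19, Ipow20, Ipow21, Ipow22, Ipow23, Ipow24]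
  ring

/-- t-derivative of the r-shape. -/
lemma L4 (f g : ℝ → ℂ) (x : ℝ) (hf : HasDerivAt f (-(36 * Complex.I * f x)) x)
    (hg : HasDerivAt g (64 * Complex.I * g x) x) (h : 32 * g x - 15 * Complex.I ≠ 0) :
    HasDerivAt (fun s => 128 * f s * (32 * g s + 9 * Complex.I) / (32 * g s - 15 * Complex.I) ^ 2)
      (f x * (-622080 * Complex.I + 7766016 * g x - 13107200 * Complex.I * g x ^ 2)
        / (32 * g x - 15 * Complex.I) ^ 3) x := by
  have hd := (hasDerivAt_pow 2 (32 * g x - 15 * Complex.I)).comp x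
      ((hg.const_mul (32 : ℂ)).sub_const (15 * Complex.I))
  have h1 := ((hf.const_mul (128 : ℂ)).mul ((hg.const_mul (32 : ℂ)).add_const (9 * Complex.I))).div
      hd (pow_ne_zero 2 h)
  convert h1 using 1
  · rfl
  · rfl
  simp only [Function.comp_apply, Pi.mul_apply, Pi.add_apply, Pi.sub_apply, Nat.reduceSub, pow_one, Nat.cast_ofNat]
  field_simp
  ring_nf
  simp only [Ipow2, Ipow3, Ipow4, Ipow5, Ipow6, Ipow7, Ipow8, Ipow9, Ipow10, Ipow11, Ipow12, Ipow13, Ipow14, Ipow15, Ipow16, Ipow17, Ipow18, Ipow19, Ipow20, Ipow21, Ipow22, Ipow23, Ipow24]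
  ring

/-- x-derivative of the qx-shape. -/
lemma L5 (f g : ℝ → ℂ) (x : ℝ) (hf : HasDerivAt f (10 * f x) x)
    (hg : HasDerivAt g (16 * g x) x) (h : 32 * g x + 9 * Complex.I ≠ 0) :
    HasDerivAt (fun s => f s * (259200 + 3465216 * Complex.I * g s - 1179648 * g s ^ 2)
        / (32 * g s + 9 * Complex.I) ^ 3)
      (f x * (23328000 * Complex.I - 1126047744 * g x - 2885419008 * Complex.I * g x ^ 2
          + 226492416 * g x ^ 3) / (32 * g x + 9 * Complex.I) ^ 4) x := by
  have hg2 := (hasDerivAt_pow 2 (g x)).comp x hg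
  have hd := (hasDerivAt_pow 3 (32 * g x + 9 * Complex.I)).comp x
      ((hg.const_mul (32 : ℂ)).add_const (9 * Complex.I))
  have h1 := (hf.mul (((hasDerivAt_const x (259200 : ℂ)).add
      (hg.const_mul (3465216 * Complex.I))).sub (hg2.const_mul (1179648 : ℂ)))).div
      hd (pow_ne_zero 3 h)
  convert h1 using 1
  · rfl
  · rfl
  simp only [Function.comp_apply, Pi.mul_apply, Pi.add_apply, Pi.sub_apply, Nat.reduceSub, pow_one, Nat.cast_ofNat]
  field_simp
  ring_nf
  simp only [Ipow2, Ipow3, Ipow4, Ipow5, Ipow6, Ipow7, Ipow8, Ipow9, Ipow10, Ipow11, Ipow12, Ipow13, Ipow14, Ipow15, Ipow16, Ipow17, Ipow18, Ipow19, Ipow20, Ipow21, Ipow22, Ipow23, Ipow24]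
  ring

/-- x-derivative of the rx-shape. -/
lemma L6 (f g : ℝ → ℂ) (x : ℝ) (hf : HasDerivAt f (6 * f x) x)
    (hg : HasDerivAt g (16 * g x) x) (h : 32 * g x - 15 * Complex.I ≠ 0) :
    HasDerivAt (fun s => f s * (103680 - 2310144 * Complex.I * g s - 1310720 * g s ^ 2)
        / (32 * g s - 15 * Complex.I) ^ 3)
      (f x * (-9331200 * Complex.I - 901693440 * g x + 2669150208 * Complex.I * g x ^ 2
          + 419430400 * g x ^ 3) / (32 * g x - 15 * Complex.I) ^ 4) x := by
  have hg2 := (hasDerivAt_pow 2 (g x)).comp x hg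
  have hd := (hasDerivAt_pow 3 (32 * g x - 15 * Complex.I)).comp x
      ((hg.const_mul (32 : ℂ)).sub_const (15 * Complex.I))
  have h1 := (hf.mul (((hasDerivAt_const x (103680 : ℂ)).sub
      (hg.const_mul (2310144 * Complex.I))).sub (hg2.const_mul (1310720 : ℂ)))).div
      hd (pow_ne_zero 3 h)
  convert h1 using 1
  · rfl
  · rfl
  simp only [Function.comp_apply, Pi.mul_apply, Pi.add_apply, Pi.sub_apply, Nat.reduceSub, pow_one, Nat.cast_ofNat]
  field_simp
  ring_nf
  simp only [Ipow2, Ipow3, Ipow4, Ipow5, Ipow6, Ipow7, Ipow8, Ipow9, Ipow10, Ipow11, Ipow12, Ipow13, Ipow14, Ipow15, Ipow16, Ipow17, Ipow18, Ipow19, Ipow20, Ipow21, Ipow22, Ipow23, Ipow24]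
  ring

/-- First Kaup–Newell equation, univariate algebraic core. -/
lemma alg1 (e : ℂ) (h9 : 32 * e + 9 * Complex.I ≠ 0) (h15 : 32 * e - 15 * Complex.I ≠ 0) :
    Complex.I * ((2592000 * Complex.I - 11649024 * e + 7077888 * Complex.I * e ^ 2)
        / (32 * e + 9 * Complex.I) ^ 3)
      + (23328000 * Complex.I - 1126047744 * e - 2885419008 * Complex.I * e ^ 2
          + 226492416 * e ^ 3) / (32 * e + 9 * Complex.I) ^ 4
      - Complex.I * (2 * (192 * (32 * e - 15 * Complex.I) / (32 * e + 9 * Complex.I) ^ 2)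
            * ((259200 + 3465216 * Complex.I * e - 1179648 * e ^ 2)
                / (32 * e + 9 * Complex.I) ^ 3)
            * (128 * (32 * e + 9 * Complex.I) / (32 * e - 15 * Complex.I) ^ 2) * e
          + (192 * (32 * e - 15 * Complex.I) / (32 * e + 9 * Complex.I) ^ 2) ^ 2
            * ((103680 - 2310144 * Complex.I * e - 1310720 * e ^ 2)
                / (32 * e - 15 * Complex.I) ^ 3) * e) = 0 := by
  rw [sub_eq_zero]
  field_simp
  have hA : e * 32 + I * 9 ≠ 0 := by convert h9 using 1; ring
  have hB : e * 32 - I * 15 ≠ 0 := by convert h15 using 1; ring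
  rw [div_eq_div_iff (by apply_rules [pow_ne_zero, mul_ne_zero]) (by apply_rules [pow_ne_zero, mul_ne_zero])]
  ring_nf
  simp only [Ipow2, Ipow3, Ipow4, Ipow5, Ipow6, Ipow7, Ipow8, Ipow9, Ipow10, Ipow11, Ipow12, Ipow13, Ipow14, Ipow15, Ipow16, Ipow17, Ipow18, Ipow19, Ipow20, Ipow21, Ipow22, Ipow23, Ipow24]
  ring

/-- Second Kaup–Newell equation, univariate algebraic core. -/
lemma alg2 (e : ℂ) (h9 : 32 * e + 9 * Complex.I ≠ 0) (h15 : 32 * e - 15 * Complex.I ≠ 0) :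
    Complex.I * ((-622080 * Complex.I + 7766016 * e - 13107200 * Complex.I * e ^ 2)
        / (32 * e - 15 * Complex.I) ^ 3)
      - (-9331200 * Complex.I - 901693440 * e + 2669150208 * Complex.I * e ^ 2
          + 419430400 * e ^ 3) / (32 * e - 15 * Complex.I) ^ 4
      - Complex.I * (((259200 + 3465216 * Complex.I * e - 1179648 * e ^ 2)
              / (32 * e + 9 * Complex.I) ^ 3)
            * (128 * (32 * e + 9 * Complex.I) / (32 * e - 15 * Complex.I) ^ 2) ^ 2 * e
          + (192 * (32 * e - 15 * Complex.I) / (32 * e + 9 * Complex.I) ^ 2)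
            * (2 * (128 * (32 * e + 9 * Complex.I) / (32 * e - 15 * Complex.I) ^ 2)
                * ((103680 - 2310144 * Complex.I * e - 1310720 * e ^ 2)
                    / (32 * e - 15 * Complex.I) ^ 3)) * e) = 0 := by
  rw [sub_eq_zero]
  field_simp
  have hA : e * 32 + I * 9 ≠ 0 := by convert h9 using 1; ring
  have hB : e * 32 - I * 15 ≠ 0 := by convert h15 using 1; ring
  rw [div_eq_div_iff (by apply_rules [pow_ne_zero, mul_ne_zero]) (by apply_rules [pow_ne_zero, mul_ne_zero])]
  ring_nf
  simp only [Ipow2, Ipow3, Ipow4, Ipow5, Ipow6, Ipow7, Ipow8, Ipow9, Ipow10, Ipow11, Ipow12, Ipow13, Ipow14, Ipow15, Ipow16, Ipow17, Ipow18, Ipow19, Ipow20, Ipow21, Ipow22, Ipow23, Ipow24]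
  ring

end KN17

/-- At every point where both denominators are nonzero, the explicit pair `(q, r)`
satisfies the Kaup–Newell system. -/
theorem stmt17 :
    ∀ x t : ℝ,
      32 * Complex.exp (16 * ((x : ℂ) + 4 * Complex.I * (t : ℂ))) + 9 * Complex.I ≠ 0 →
      32 * Complex.exp (16 * ((x : ℂ) + 4 * Complex.I * (t : ℂ))) - 15 * Complex.I ≠ 0 →
      (Complex.I * pdt qEx (x, t) + pdxx qEx (x, t)
          - Complex.I * deriv (fun s => (qEx (s, t)) ^ 2 * rEx (s, t)) x = 0 ∧
        Complex.I * pdt rEx (x, t) - pdxx rEx (x, t)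
          - Complex.I * deriv (fun s => qEx (s, t) * (rEx (s, t)) ^ 2) x = 0) := by
  intro x t h9 h15
  rw [show (16 : ℂ) * ((x : ℂ) + 4 * Complex.I * (t : ℂ)) = 16 * (x : ℂ) + 64 * Complex.I * (t : ℂ) from by ring] at h9 h15
  have hqfun : (fun s : ℝ => qEx (s, t)) = (fun s : ℝ => 192 * Complex.exp (10 * (s : ℂ) + 100 * Complex.I * (t : ℂ)) * (32 * Complex.exp (16 * (s : ℂ) + 64 * Complex.I * (t : ℂ)) - 15 * Complex.I) / (32 * Complex.exp (16 * (s : ℂ) + 64 * Complex.I * (t : ℂ)) + 9 * Complex.I) ^ 2) := by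
    funext s
    show 192 * Complex.exp (10 * ((s : ℂ) + 10 * Complex.I * (t : ℂ)))
        * (32 * Complex.exp (16 * ((s : ℂ) + 4 * Complex.I * (t : ℂ))) - 15 * Complex.I)
        / (32 * Complex.exp (16 * ((s : ℂ) + 4 * Complex.I * (t : ℂ))) + 9 * Complex.I) ^ 2 = 192 * Complex.exp (10 * (s : ℂ) + 100 * Complex.I * (t : ℂ)) * (32 * Complex.exp (16 * (s : ℂ) + 64 * Complex.I * (t : ℂ)) - 15 * Complex.I) / (32 * Complex.exp (16 * (s : ℂ) + 64 * Complex.I * (t : ℂ)) + 9 * Complex.I) ^ 2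
    rw [show (10 : ℂ) * ((s : ℂ) + 10 * Complex.I * (t : ℂ)) = 10 * (s : ℂ) + 100 * Complex.I * (t : ℂ) from by ring,
        show (16 : ℂ) * ((s : ℂ) + 4 * Complex.I * (t : ℂ)) = 16 * (s : ℂ) + 64 * Complex.I * (t : ℂ) from by ring]
  have hrfun : (fun s : ℝ => rEx (s, t)) = (fun s : ℝ => 128 * Complex.exp (6 * (s : ℂ) - 36 * Complex.I * (t : ℂ)) * (32 * Complex.exp (16 * (s : ℂ) + 64 * Complex.I * (t : ℂ)) + 9 * Complex.I) / (32 * Complex.exp (16 * (s : ℂ) + 64 * Complex.I * (t : ℂ)) - 15 * Complex.I) ^ 2) := by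
    funext s
    show 128 * Complex.exp (6 * ((s : ℂ) - 6 * Complex.I * (t : ℂ)))
        * (32 * Complex.exp (16 * ((s : ℂ) + 4 * Complex.I * (t : ℂ))) + 9 * Complex.I)
        / (32 * Complex.exp (16 * ((s : ℂ) + 4 * Complex.I * (t : ℂ))) - 15 * Complex.I) ^ 2 = 128 * Complex.exp (6 * (s : ℂ) - 36 * Complex.I * (t : ℂ)) * (32 * Complex.exp (16 * (s : ℂ) + 64 * Complex.I * (t : ℂ)) + 9 * Complex.I) / (32 * Complex.exp (16 * (s : ℂ) + 64 * Complex.I * (t : ℂ)) - 15 * Complex.I) ^ 2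
    rw [show (6 : ℂ) * ((s : ℂ) - 6 * Complex.I * (t : ℂ)) = 6 * (s : ℂ) - 36 * Complex.I * (t : ℂ) from by ring,
        show (16 : ℂ) * ((s : ℂ) + 4 * Complex.I * (t : ℂ)) = 16 * (s : ℂ) + 64 * Complex.I * (t : ℂ) from by ring]
  have hqfunT : (fun s : ℝ => qEx (x, s)) = (fun s : ℝ => 192 * Complex.exp (10 * (x : ℂ) + 100 * Complex.I * (s : ℂ)) * (32 * Complex.exp (16 * (x : ℂ) + 64 * Complex.I * (s : ℂ)) - 15 * Complex.I) / (32 * Complex.exp (16 * (x : ℂ) + 64 * Complex.I * (s : ℂ)) + 9 * Complex.I) ^ 2) := by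
    funext s
    show 192 * Complex.exp (10 * ((x : ℂ) + 10 * Complex.I * (s : ℂ)))
        * (32 * Complex.exp (16 * ((x : ℂ) + 4 * Complex.I * (s : ℂ))) - 15 * Complex.I)
        / (32 * Complex.exp (16 * ((x : ℂ) + 4 * Complex.I * (s : ℂ))) + 9 * Complex.I) ^ 2 = 192 * Complex.exp (10 * (x : ℂ) + 100 * Complex.I * (s : ℂ)) * (32 * Complex.exp (16 * (x : ℂ) + 64 * Complex.I * (s : ℂ)) - 15 * Complex.I) / (32 * Complex.exp (16 * (x : ℂ) + 64 * Complex.I * (s : ℂ)) + 9 * Complex.I) ^ 2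
    rw [show (10 : ℂ) * ((x : ℂ) + 10 * Complex.I * (s : ℂ)) = 10 * (x : ℂ) + 100 * Complex.I * (s : ℂ) from by ring,
        show (16 : ℂ) * ((x : ℂ) + 4 * Complex.I * (s : ℂ)) = 16 * (x : ℂ) + 64 * Complex.I * (s : ℂ) from by ring]
  have hrfunT : (fun s : ℝ => rEx (x, s)) = (fun s : ℝ => 128 * Complex.exp (6 * (x : ℂ) - 36 * Complex.I * (s : ℂ)) * (32 * Complex.exp (16 * (x : ℂ) + 64 * Complex.I * (s : ℂ)) + 9 * Complex.I) / (32 * Complex.exp (16 * (x : ℂ) + 64 * Complex.I * (s : ℂ)) - 15 * Complex.I) ^ 2) := by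
    funext s
    show 128 * Complex.exp (6 * ((x : ℂ) - 6 * Complex.I * (s : ℂ)))
        * (32 * Complex.exp (16 * ((x : ℂ) + 4 * Complex.I * (s : ℂ))) + 9 * Complex.I)
        / (32 * Complex.exp (16 * ((x : ℂ) + 4 * Complex.I * (s : ℂ))) - 15 * Complex.I) ^ 2 = 128 * Complex.exp (6 * (x : ℂ) - 36 * Complex.I * (s : ℂ)) * (32 * Complex.exp (16 * (x : ℂ) + 64 * Complex.I * (s : ℂ)) + 9 * Complex.I) / (32 * Complex.exp (16 * (x : ℂ) + 64 * Complex.I * (s : ℂ)) - 15 * Complex.I) ^ 2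
    rw [show (6 : ℂ) * ((x : ℂ) - 6 * Complex.I * (s : ℂ)) = 6 * (x : ℂ) - 36 * Complex.I * (s : ℂ) from by ring,
        show (16 : ℂ) * ((x : ℂ) + 4 * Complex.I * (s : ℂ)) = 16 * (x : ℂ) + 64 * Complex.I * (s : ℂ) from by ring]
  have Hq : ∀ s : ℝ, 32 * Complex.exp (16 * (s : ℂ) + 64 * Complex.I * (t : ℂ)) + 9 * Complex.I ≠ 0 →
      HasDerivAt (fun u : ℝ => qEx (u, t)) (Complex.exp (10 * (s : ℂ) + 100 * Complex.I * (t : ℂ)) * (259200 + 3465216 * Complex.I * Complex.exp (16 * (s : ℂ) + 64 * Complex.I * (t : ℂ)) - 1179648 * Complex.exp (16 * (s : ℂ) + 64 * Complex.I * (t : ℂ)) ^ 2) / (32 * Complex.exp (16 * (s : ℂ) + 64 * Complex.I * (t : ℂ)) + 9 * Complex.I) ^ 3) s := by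
    intro s hs
    rw [hqfun]
    exact KN17.L1 _ _ s (KN17.hexpx 10 (100 * Complex.I * (t : ℂ)) s) (KN17.hexpx 16 (64 * Complex.I * (t : ℂ)) s) hs
  have Hr : ∀ s : ℝ, 32 * Complex.exp (16 * (s : ℂ) + 64 * Complex.I * (t : ℂ)) - 15 * Complex.I ≠ 0 →
      HasDerivAt (fun u : ℝ => rEx (u, t)) (Complex.exp (6 * (s : ℂ) - 36 * Complex.I * (t : ℂ)) * (103680 - 2310144 * Complex.I * Complex.exp (16 * (s : ℂ) + 64 * Complex.I * (t : ℂ)) - 1310720 * Complex.exp (16 * (s : ℂ) + 64 * Complex.I * (t : ℂ)) ^ 2) / (32 * Complex.exp (16 * (s : ℂ) + 64 * Complex.I * (t : ℂ)) - 15 * Complex.I) ^ 3) s := by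
    intro s hs
    rw [hrfun]
    exact KN17.L3 _ _ s (KN17.hexpx' 6 (36 * Complex.I * (t : ℂ)) s) (KN17.hexpx 16 (64 * Complex.I * (t : ℂ)) s) hs
  have hev : ∀ᶠ (s : ℝ) in nhds x, 32 * Complex.exp (16 * (s : ℂ) + 64 * Complex.I * (t : ℂ)) + 9 * Complex.I ≠ 0 := by
    have hc : Continuous (fun s : ℝ => 32 * Complex.exp (16 * (s : ℂ) + 64 * Complex.I * (t : ℂ)) + 9 * Complex.I) := by fun_prop
    exact hc.continuousAt.eventually_ne h9
  have hpdxxq : pdxx qEx (x, t) = Complex.exp (10 * (x : ℂ) + 100 * Complex.I * (t : ℂ)) * (23328000 * Complex.I - 1126047744 * Complex.exp (16 * (x : ℂ) + 64 * Complex.I * (t : ℂ)) - 2885419008 * Complex.I * Complex.exp (16 * (x : ℂ) + 64 * Complex.I * (t : ℂ)) ^ 2 + 226492416 * Complex.exp (16 * (x : ℂ) + 64 * Complex.I * (t : ℂ)) ^ 3) / (32 * Complex.exp (16 * (x : ℂ) + 64 * Complex.I * (t : ℂ)) + 9 * Complex.I) ^ 4 := by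
    show deriv (fun s : ℝ => pdx qEx (s, t)) x = _
    have heq : (fun s : ℝ => pdx qEx (s, t)) =ᶠ[nhds x] (fun s : ℝ => Complex.exp (10 * (s : ℂ) + 100 * Complex.I * (t : ℂ)) * (259200 + 3465216 * Complex.I * Complex.exp (16 * (s : ℂ) + 64 * Complex.I * (t : ℂ)) - 1179648 * Complex.exp (16 * (s : ℂ) + 64 * Complex.I * (t : ℂ)) ^ 2) / (32 * Complex.exp (16 * (s : ℂ) + 64 * Complex.I * (t : ℂ)) + 9 * Complex.I) ^ 3) :=
      hev.mono fun s hs => (Hq s hs).deriv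
    rw [heq.deriv_eq]
    exact (KN17.L5 _ _ x (KN17.hexpx 10 (100 * Complex.I * (t : ℂ)) x) (KN17.hexpx 16 (64 * Complex.I * (t : ℂ)) x) h9).deriv
  have hevr : ∀ᶠ (s : ℝ) in nhds x, 32 * Complex.exp (16 * (s : ℂ) + 64 * Complex.I * (t : ℂ)) - 15 * Complex.I ≠ 0 := by
    have hc : Continuous (fun s : ℝ => 32 * Complex.exp (16 * (s : ℂ) + 64 * Complex.I * (t : ℂ)) - 15 * Complex.I) := by fun_prop
    exact hc.continuousAt.eventually_ne h15
  have hpdxxr : pdxx rEx (x, t) = Complex.exp (6 * (x : ℂ) - 36 * Complex.I * (t : ℂ)) * (-9331200 * Complex.I - 901693440 * Complex.exp (16 * (x : ℂ) + 64 * Complex.I * (t : ℂ)) + 2669150208 * Complex.I * Complex.exp (16 * (x : ℂ) + 64 * Complex.I * (t : ℂ)) ^ 2 + 419430400 * Complex.exp (16 * (x : ℂ) + 64 * Complex.I * (t : ℂ)) ^ 3) / (32 * Complex.exp (16 * (x : ℂ) + 64 * Complex.I * (t : ℂ)) - 15 * Complex.I) ^ 4 := by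
    show deriv (fun s : ℝ => pdx rEx (s, t)) x = _
    have heq : (fun s : ℝ => pdx rEx (s, t)) =ᶠ[nhds x] (fun s : ℝ => Complex.exp (6 * (s : ℂ) - 36 * Complex.I * (t : ℂ)) * (103680 - 2310144 * Complex.I * Complex.exp (16 * (s : ℂ) + 64 * Complex.I * (t : ℂ)) - 1310720 * Complex.exp (16 * (s : ℂ) + 64 * Complex.I * (t : ℂ)) ^ 2) / (32 * Complex.exp (16 * (s : ℂ) + 64 * Complex.I * (t : ℂ)) - 15 * Complex.I) ^ 3) :=
      hevr.mono fun s hs => (Hr s hs).deriv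
    rw [heq.deriv_eq]
    exact (KN17.L6 _ _ x (KN17.hexpx' 6 (36 * Complex.I * (t : ℂ)) x) (KN17.hexpx 16 (64 * Complex.I * (t : ℂ)) x) h15).deriv
  have hpdtq : pdt qEx (x, t) = Complex.exp (10 * (x : ℂ) + 100 * Complex.I * (t : ℂ)) * (2592000 * Complex.I - 11649024 * Complex.exp (16 * (x : ℂ) + 64 * Complex.I * (t : ℂ)) + 7077888 * Complex.I * Complex.exp (16 * (x : ℂ) + 64 * Complex.I * (t : ℂ)) ^ 2) / (32 * Complex.exp (16 * (x : ℂ) + 64 * Complex.I * (t : ℂ)) + 9 * Complex.I) ^ 3 := by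
    show deriv (fun s : ℝ => qEx (x, s)) t = _
    rw [hqfunT]
    exact (KN17.L2 _ _ t (KN17.hexpt (100 * Complex.I) (10 * (x : ℂ)) t) (KN17.hexpt (64 * Complex.I) (16 * (x : ℂ)) t) h9).deriv
  have hpdtr : pdt rEx (x, t) = Complex.exp (6 * (x : ℂ) - 36 * Complex.I * (t : ℂ)) * (-622080 * Complex.I + 7766016 * Complex.exp (16 * (x : ℂ) + 64 * Complex.I * (t : ℂ)) - 13107200 * Complex.I * Complex.exp (16 * (x : ℂ) + 64 * Complex.I * (t : ℂ)) ^ 2) / (32 * Complex.exp (16 * (x : ℂ) + 64 * Complex.I * (t : ℂ)) - 15 * Complex.I) ^ 3 := by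
    show deriv (fun s : ℝ => rEx (x, s)) t = _
    rw [hrfunT]
    exact (KN17.L4 _ _ t (KN17.hexpt' (36 * Complex.I) (6 * (x : ℂ)) t) (KN17.hexpt (64 * Complex.I) (16 * (x : ℂ)) t) h15).deriv
  have HqX := Hq x h9
  have HrX := Hr x h15
  have hq2 : HasDerivAt (fun s : ℝ => qEx (s, t) ^ 2) (2 * qEx (x, t) * (Complex.exp (10 * (x : ℂ) + 100 * Complex.I * (t : ℂ)) * (259200 + 3465216 * Complex.I * Complex.exp (16 * (x : ℂ) + 64 * Complex.I * (t : ℂ)) - 1179648 * Complex.exp (16 * (x : ℂ) + 64 * Complex.I * (t : ℂ)) ^ 2) / (32 * Complex.exp (16 * (x : ℂ) + 64 * Complex.I * (t : ℂ)) + 9 * Complex.I) ^ 3)) x := by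
    have h2 := (hasDerivAt_pow 2 (qEx (x, t))).comp x HqX
    convert h2 using 1
    · rfl
    · rfl
    push_cast
    ring
  have hr2 : HasDerivAt (fun s : ℝ => rEx (s, t) ^ 2) (2 * rEx (x, t) * (Complex.exp (6 * (x : ℂ) - 36 * Complex.I * (t : ℂ)) * (103680 - 2310144 * Complex.I * Complex.exp (16 * (x : ℂ) + 64 * Complex.I * (t : ℂ)) - 1310720 * Complex.exp (16 * (x : ℂ) + 64 * Complex.I * (t : ℂ)) ^ 2) / (32 * Complex.exp (16 * (x : ℂ) + 64 * Complex.I * (t : ℂ)) - 15 * Complex.I) ^ 3)) x := by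
    have h2 := (hasDerivAt_pow 2 (rEx (x, t))).comp x HrX
    convert h2 using 1
    · rfl
    · rfl
    push_cast
    ring
  have hD1 : deriv (fun s : ℝ => qEx (s, t) ^ 2 * rEx (s, t)) x
      = 2 * qEx (x, t) * (Complex.exp (10 * (x : ℂ) + 100 * Complex.I * (t : ℂ)) * (259200 + 3465216 * Complex.I * Complex.exp (16 * (x : ℂ) + 64 * Complex.I * (t : ℂ)) - 1179648 * Complex.exp (16 * (x : ℂ) + 64 * Complex.I * (t : ℂ)) ^ 2) / (32 * Complex.exp (16 * (x : ℂ) + 64 * Complex.I * (t : ℂ)) + 9 * Complex.I) ^ 3) * rEx (x, t) + qEx (x, t) ^ 2 * (Complex.exp (6 * (x : ℂ) - 36 * Complex.I * (t : ℂ)) * (103680 - 2310144 * Complex.I * Complex.exp (16 * (x : ℂ) + 64 * Complex.I * (t : ℂ)) - 1310720 * Complex.exp (16 * (x : ℂ) + 64 * Complex.I * (t : ℂ)) ^ 2) / (32 * Complex.exp (16 * (x : ℂ) + 64 * Complex.I * (t : ℂ)) - 15 * Complex.I) ^ 3) :=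
    (hq2.mul HrX).deriv
  have hD2 : deriv (fun s : ℝ => qEx (s, t) * rEx (s, t) ^ 2) x
      = (Complex.exp (10 * (x : ℂ) + 100 * Complex.I * (t : ℂ)) * (259200 + 3465216 * Complex.I * Complex.exp (16 * (x : ℂ) + 64 * Complex.I * (t : ℂ)) - 1179648 * Complex.exp (16 * (x : ℂ) + 64 * Complex.I * (t : ℂ)) ^ 2) / (32 * Complex.exp (16 * (x : ℂ) + 64 * Complex.I * (t : ℂ)) + 9 * Complex.I) ^ 3) * rEx (x, t) ^ 2 + qEx (x, t) * (2 * rEx (x, t) * (Complex.exp (6 * (x : ℂ) - 36 * Complex.I * (t : ℂ)) * (103680 - 2310144 * Complex.I * Complex.exp (16 * (x : ℂ) + 64 * Complex.I * (t : ℂ)) - 1310720 * Complex.exp (16 * (x : ℂ) + 64 * Complex.I * (t : ℂ)) ^ 2) / (32 * Complex.exp (16 * (x : ℂ) + 64 * Complex.I * (t : ℂ)) - 15 * Complex.I) ^ 3)) :=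
    (HqX.mul hr2).deriv
  have hqv : qEx (x, t) = 192 * Complex.exp (10 * (x : ℂ) + 100 * Complex.I * (t : ℂ)) * (32 * Complex.exp (16 * (x : ℂ) + 64 * Complex.I * (t : ℂ)) - 15 * Complex.I) / (32 * Complex.exp (16 * (x : ℂ) + 64 * Complex.I * (t : ℂ)) + 9 * Complex.I) ^ 2 := congrFun hqfun x
  have hrv : rEx (x, t) = 128 * Complex.exp (6 * (x : ℂ) - 36 * Complex.I * (t : ℂ)) * (32 * Complex.exp (16 * (x : ℂ) + 64 * Complex.I * (t : ℂ)) + 9 * Complex.I) / (32 * Complex.exp (16 * (x : ℂ) + 64 * Complex.I * (t : ℂ)) - 15 * Complex.I) ^ 2 := congrFun hrfun x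
  have hA : Complex.exp (10 * (x : ℂ) + 100 * Complex.I * (t : ℂ)) = Complex.exp ((x : ℂ) + 10 * Complex.I * (t : ℂ)) ^ 10 := by
    rw [← Complex.exp_nat_mul]
    congr 1
    push_cast
    ring
  have hB : Complex.exp (6 * (x : ℂ) - 36 * Complex.I * (t : ℂ)) = Complex.exp ((x : ℂ) - 6 * Complex.I * (t : ℂ)) ^ 6 := by
    rw [← Complex.exp_nat_mul]
    congr 1
    push_cast
    ring
  have hE : Complex.exp (16 * (x : ℂ) + 64 * Complex.I * (t : ℂ)) = Complex.exp ((x : ℂ) + 10 * Complex.I * (t : ℂ)) ^ 10 * Complex.exp ((x : ℂ) - 6 * Complex.I * (t : ℂ)) ^ 6 := by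
    rw [← Complex.exp_nat_mul, ← Complex.exp_nat_mul, ← Complex.exp_add]
    congr 1
    push_cast
    ring
  rw [hE] at h9 h15
  constructor
  · rw [hpdtq, hpdxxq, hD1, hqv, hrv, hA, hB, hE]
    linear_combination (Complex.exp ((x : ℂ) + 10 * Complex.I * (t : ℂ))) ^ 10 * KN17.alg1 (Complex.exp ((x : ℂ) + 10 * Complex.I * (t : ℂ)) ^ 10 * Complex.exp ((x : ℂ) - 6 * Complex.I * (t : ℂ)) ^ 6) h9 h15
  · rw [hpdtr, hpdxxr, hD2, hqv, hrv, hA, hB, hE]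
    linear_combination (Complex.exp ((x : ℂ) - 6 * Complex.I * (t : ℂ))) ^ 6 * KN17.alg2 (Complex.exp ((x : ℂ) + 10 * Complex.I * (t : ℂ)) ^ 10 * Complex.exp ((x : ℂ) - 6 * Complex.I * (t : ℂ)) ^ 6) h9 h15
end
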